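/- arXiv:2404.09268 — 3 statements merged into one kernel-verified Lean document; each statement's English description precedes it below -/
import Mathlib

section
/- Let G be a finite simple graph with at least two vertices. Then λ(G) ≤ -η(G), where η(G) is the maximum, over all induced bipartite subgraphs H of G with bipartition V₁ ∪ V₂ into nonempty parts, of |E(H)| / √(|V₁|·|V₂|). -/
/-!
Common definitions: smallest adjacency eigenvalue, independent vertex sets,
edge counts of induced subgraphs, chromatic number, independence number,
and the invariants `η`, `ι`, `θ` from the paper.
-/

open Finset SimpleGraph Matrix

set_option linter.unusedSectionVars false

variable {V : Type} [Fintype V] [DecidableEq V]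

/-- A finite set of vertices is an independent set in `G`. -/
def IsIndepFinset (G : SimpleGraph V) (s : Finset V) : Prop :=
  ∀ u ∈ s, ∀ v ∈ s, ¬ G.Adj u v

/-- The adjacency matrix of a finite graph is Hermitian (over `ℝ`). -/
theorem adj_isHermitian (G : SimpleGraph V) [DecidableRel G.Adj] :
    (G.adjMatrix ℝ).IsHermitian := by
  rw [Matrix.IsHermitian, conjTranspose_eq_transpose_of_trivial]
  exact isSymm_adjMatrix G

/-- `λ(G)`: the smallest eigenvalue of the adjacency matrix of `G`. -/
noncomputable def lambdaMin (G : SimpleGraph V) : ℝ :=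
  letI := Classical.decRel G.Adj
  ⨅ i, (adj_isHermitian G).eigenvalues i

/-- `|E(G)|`: the number of edges of `G`. -/
noncomputable def edgeCount (G : SimpleGraph V) : ℕ := Nat.card G.edgeSet

/-- The number of edges of the subgraph of `G` induced on the vertex set `s`. -/
noncomputable def inducedEdgeCount (G : SimpleGraph V) (s : Finset V) : ℕ :=
  Nat.card (G.induce (s : Set V)).edgeSet

/-- `χ(G)`: the chromatic number of `G`, as a natural number. -/
noncomputable def chromNum (G : SimpleGraph V) : ℕ := G.chromaticNumber.toNat

/-- `α(G)`: the independence number of `G`. -/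
noncomputable def indepNum (G : SimpleGraph V) : ℕ :=
  sSup {k | ∃ s : Finset V, IsIndepFinset G s ∧ s.card = k}

/-- `θ(G) = min {n/2, α(G)}`. -/
noncomputable def theta (G : SimpleGraph V) : ℝ :=
  min ((Fintype.card V : ℝ) / 2) (_root_.indepNum G : ℝ)

/-- `η(G)`: the supremum of `|E(H)| / √(|V₁|·|V₂|)` over all induced bipartite
subgraphs `H` of `G` with bipartition into nonempty independent sets `V₁`, `V₂`. -/
noncomputable def eta (G : SimpleGraph V) : ℝ :=
  sSup {x : ℝ | ∃ V₁ V₂ : Finset V, V₁.Nonempty ∧ V₂.Nonempty ∧ Disjoint V₁ V₂ ∧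
    IsIndepFinset G V₁ ∧ IsIndepFinset G V₂ ∧
    x = (inducedEdgeCount G (V₁ ∪ V₂) : ℝ) / Real.sqrt ((V₁.card : ℝ) * (V₂.card : ℝ))}

/-- `ι(G)`: the supremum of the average degree `2|E(H)|/|V(H)|` over all nonempty
induced bipartite subgraphs `H` of `G`. -/
noncomputable def iota (G : SimpleGraph V) : ℝ :=
  sSup {x : ℝ | ∃ V₁ V₂ : Finset V, (V₁ ∪ V₂).Nonempty ∧ Disjoint V₁ V₂ ∧
    IsIndepFinset G V₁ ∧ IsIndepFinset G V₂ ∧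
    x = 2 * (inducedEdgeCount G (V₁ ∪ V₂) : ℝ) / ((V₁ ∪ V₂).card : ℝ)}

/-!
Evaluate the Rayleigh quotient of the adjacency matrix `A` at the test vector
`z = √|V₂| · 1_{V₁} - √|V₁| · 1_{V₂}`. Since `V₁` and `V₂` are independent, only the two
off-diagonal blocks of `A` contribute, so `zᵀ A z = -2 √(|V₁| |V₂|) · e(V₁, V₂)`, while
`zᵀ z = 2 |V₁| |V₂|`. Comparing with `λ(G) · zᵀ z ≤ zᵀ A z` gives `e(V₁, V₂) / √(|V₁| |V₂|) ≤ -λ(G)`.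
-/

open scoped MatrixOrder in
theorem Matrix.IsHermitian.iInf_eigenvalues_mul_dotProduct_self_le {n : Type*} [Fintype n]
    [DecidableEq n] {A : Matrix n n ℝ} (hA : A.IsHermitian) (x : n → ℝ) :
    (⨅ i, hA.eigenvalues i) * (x ⬝ᵥ x) ≤ x ⬝ᵥ A *ᵥ x := by
  have hle : algebraMap ℝ (Matrix n n ℝ) (⨅ i, hA.eigenvalues i) ≤ A := by
    rw [algebraMap_le_iff_le_spectrum hA.isSelfAdjoint, hA.spectrum_real_eq_range_eigenvalues]
    rintro _ ⟨i, rfl⟩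
    exact ciInf_le (Finite.bddBelow_range _) i
  simpa [sub_mulVec, dotProduct_sub, Algebra.algebraMap_eq_smul_one, smul_mulVec, smul_eq_mul]
    using (le_iff.mp hle).dotProduct_mulVec_nonneg x

section Indicator

variable {α R : Type*} [Fintype α] [NonAssocSemiring R]

theorem indicator_one_dotProduct (s : Finset α) (v : α → R) :
    (s : Set α).indicator 1 ⬝ᵥ v = ∑ i ∈ s, v i := by
  classical
  simp [dotProduct, Set.indicator_apply, sum_ite_mem]

theorem dotProduct_indicator_one (v : α → R) (s : Finset α) :
    v ⬝ᵥ (s : Set α).indicator 1 = ∑ i ∈ s, v i := by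
  classical
  simp [dotProduct, Set.indicator_apply, sum_ite_mem]

theorem indicator_one_dotProduct_indicator_one [DecidableEq α] (s t : Finset α) :
    (s : Set α).indicator (1 : α → R) ⬝ᵥ (t : Set α).indicator 1 = #(s ∩ t) := by
  simp [indicator_one_dotProduct, Set.indicator_apply, sum_ite_mem]

theorem SimpleGraph.indicator_one_dotProduct_adjMatrix_mulVec_indicator_one (G : SimpleGraph α)
    [DecidableRel G.Adj] (s t : Finset α) :
    (s : Set α).indicator (1 : α → R) ⬝ᵥ G.adjMatrix R *ᵥ (t : Set α).indicator 1 =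
      #(G.interedges s t) := by
  simp only [indicator_one_dotProduct, mulVec, dotProduct_indicator_one, adjMatrix_apply,
    interedges, Rel.interedges, natCast_card_filter, sum_product]

end Indicator

namespace SimpleGraph

variable {α : Type*} (G : SimpleGraph α) [DecidableRel G.Adj]

theorem card_interedges_comm (s t : Finset α) : #(G.interedges s t) = #(G.interedges t s) :=
  have := G.symm
  Rel.card_interedges_comm s t

variable [DecidableEq α]

theorem card_interedges_union_left {s t : Finset α} (hst : Disjoint s t) (u : Finset α) :
    #(G.interedges (s ∪ t) u) = #(G.interedges s u) + #(G.interedges t u) := by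
  rw [← card_union_of_disjoint (G.interedges_disjoint_left hst u)]
  simp [interedges_def, union_product, filter_union]

theorem card_interedges_union_right (s : Finset α) {t u : Finset α} (htu : Disjoint t u) :
    #(G.interedges s (t ∪ u)) = #(G.interedges s t) + #(G.interedges s u) := by
  rw [← card_union_of_disjoint (G.interedges_disjoint_right s htu)]
  simp [interedges_def, product_union, filter_union]

end SimpleGraph

theorem IsIndepFinset.interedges_eq_empty {G : SimpleGraph V} [DecidableRel G.Adj] {s : Finset V}
    (hs : IsIndepFinset G s) : G.interedges s s = ∅ := by
  ext ⟨u, v⟩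
  simpa [mk_mem_interedges_iff] using fun hu hv => hs u hu v hv

theorem two_mul_inducedEdgeCount (G : SimpleGraph V) [DecidableRel G.Adj] (s : Finset V) :
    2 * inducedEdgeCount G s = #(G.interedges s s) := by
  rw [inducedEdgeCount, Nat.card_eq_fintype_card, ← edgeFinset_card,
    ← dart_card_eq_twice_card_edges, ← Fintype.card_coe]
  exact Fintype.card_congr
    { toFun d := ⟨(d.fst, d.snd), (G.mk_mem_interedges_iff).mpr ⟨d.fst.2, d.snd.2, d.adj⟩⟩
      invFun e :=
        have he := (G.mem_interedges_iff).mp e.2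
        ⟨(⟨e.1.1, he.1⟩, ⟨e.1.2, he.2.1⟩), he.2.2⟩
      left_inv _ := rfl
      right_inv _ := rfl }

theorem inducedEdgeCount_union {G : SimpleGraph V} [DecidableRel G.Adj] {s t : Finset V}
    (hst : Disjoint s t) (hs : IsIndepFinset G s) (ht : IsIndepFinset G t) :
    inducedEdgeCount G (s ∪ t) = #(G.interedges s t) := by
  have h := two_mul_inducedEdgeCount G (s ∪ t)
  rw [G.card_interedges_union_left hst, G.card_interedges_union_right _ hst,
    G.card_interedges_union_right _ hst, hs.interedges_eq_empty, ht.interedges_eq_empty,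
    G.card_interedges_comm t s] at h
  simp at h
  omega

theorem lambdaMin_mul_dotProduct_self_le (G : SimpleGraph V) [DecidableRel G.Adj] (x : V → ℝ) :
    lambdaMin G * (x ⬝ᵥ x) ≤ x ⬝ᵥ G.adjMatrix ℝ *ᵥ x := by
  convert (@adj_isHermitian V _ _ G (Classical.decRel _)).iInf_eigenvalues_mul_dotProduct_self_le x
  rfl

theorem lambdaMin_nonpos (G : SimpleGraph V) : lambdaMin G ≤ 0 := by
  classical
  cases isEmpty_or_nonempty V with
  | inl _ => simp [lambdaMin]
  | inr h =>
    obtain ⟨v⟩ := h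
    simpa using lambdaMin_mul_dotProduct_self_le G (Pi.single v 1)

theorem card_interedges_div_sqrt_le_neg_lambdaMin (G : SimpleGraph V) [DecidableRel G.Adj]
    {s t : Finset V} (hs : s.Nonempty) (ht : t.Nonempty) (hst : Disjoint s t)
    (his : IsIndepFinset G s) (hit : IsIndepFinset G t) :
    #(G.interedges s t) / √(#s * #t) ≤ -lambdaMin G := by
  set p : ℝ := ((#s : ℕ) : ℝ) with hp_def
  set q : ℝ := ((#t : ℕ) : ℝ) with hq_def
  set e : ℝ := ((#(G.interedges s t) : ℕ) : ℝ) with he_def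
  have hp : 0 < p := by simpa [p] using hs.card_pos
  have hq : 0 < q := by simpa [q] using ht.card_pos
  set z : V → ℝ := √q • (s : Set V).indicator 1 - √p • (t : Set V).indicator 1
  have hzz : z ⬝ᵥ z = 2 * (√p * √q) ^ 2 := by
    simp only [z, sub_dotProduct, dotProduct_sub, smul_dotProduct, dotProduct_smul, smul_eq_mul,
      indicator_one_dotProduct_indicator_one, inter_self, disjoint_iff_inter_eq_empty.mp hst,
      disjoint_iff_inter_eq_empty.mp hst.symm, card_empty, Nat.cast_zero, ← hp_def, ← hq_def]
    rw [mul_pow, Real.sq_sqrt hp.le, Real.sq_sqrt hq.le]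
    linear_combination p * Real.mul_self_sqrt hq.le + q * Real.mul_self_sqrt hp.le
  have hzAz : z ⬝ᵥ G.adjMatrix ℝ *ᵥ z = -2 * (√p * √q) * e := by
    simp only [z, sub_dotProduct, dotProduct_sub, mulVec_sub, mulVec_smul, smul_dotProduct,
      dotProduct_smul, smul_eq_mul, indicator_one_dotProduct_adjMatrix_mulVec_indicator_one,
      his.interedges_eq_empty, hit.interedges_eq_empty, G.card_interedges_comm t s,
      card_empty, Nat.cast_zero, ← he_def]
    ring
  have key := lambdaMin_mul_dotProduct_self_le G z
  rw [hzz, hzAz] at key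
  rw [Real.sqrt_mul hp.le, div_le_iff₀ (by positivity)]
  refine le_of_mul_le_mul_left ?_ (by positivity : (0 : ℝ) < 2 * (√p * √q))
  linarith

theorem smallest_eigenvalue_le_neg_eta_general (G : SimpleGraph V) :
    lambdaMin G ≤ -eta G := by
  classical
  rw [le_neg]
  -- `lambdaMin_nonpos` covers the junk value `eta G = sSup ∅ = 0`.
  refine Real.sSup_le ?_ (neg_nonneg.mpr (lambdaMin_nonpos G))
  rintro _ ⟨s, t, hs, ht, hst, his, hit, rfl⟩
  rw [inducedEdgeCount_union hst his hit]
  exact card_interedges_div_sqrt_le_neg_lambdaMin G hs ht hst his hit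

/-- Corollary 2.3. Let `G` be a graph with at least two vertices.
Then `λ(G) ≤ -η(G)`. -/
theorem smallest_eigenvalue_le_neg_eta (G : SimpleGraph V) (hV : 2 ≤ Fintype.card V) :
    lambdaMin G ≤ -eta G :=
  smallest_eigenvalue_le_neg_eta_general G
end

section
/- Let k ≥ 2 and t ≥ 1, and let G be the complete k-partite graph in which each of the k parts has exactly t vertices. Then the smallest adjacency eigenvalue of G equals -t, and λ(G) = -|E(G)| / (C(χ(G), 2) · θ(G)); i.e., the bound λ(G) ≤ -|E(G)|/(C(χ(G),2)·θ(G)) holds with equality. -/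
/-!
Common definitions: smallest adjacency eigenvalue, independent vertex sets,
edge counts of induced subgraphs, chromatic number, independence number,
and the invariants `η`, `ι`, `θ` from the paper.
-/

open Finset SimpleGraph Matrix

set_option linter.unusedSectionVars false

variable {V : Type} [Fintype V] [DecidableEq V]

/-!
In the complete multipartite graph with parts `V i`, the quadratic form of the adjacency matrix is
`xᵀAx = (∑ x)² - ∑ᵢ (∑_{V i} x)²`. By Cauchy–Schwarz on each part, `xᵀAx ≥ -t ‖x‖²` as soon as
every part has at most `t` vertices, while the difference of the indicator vectors of two parts of
size `t` is an eigenvector for `-t`; so `λ = -t`. Equality in the bound is then the arithmetic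
`C(k,2) t² / (C(k,2) · t) = t`, from `|E| = C(k,2) t²`, `χ = k` and `θ = α = t`.
-/

namespace Matrix.IsHermitian

variable {n : Type*} [Fintype n] [DecidableEq n] {A : Matrix n n ℝ} (hA : A.IsHermitian) {c : ℝ}

lemma le_eigenvalues_of_forall_le_dotProduct_mulVec
    (h : ∀ x : n → ℝ, c * (x ⬝ᵥ x) ≤ x ⬝ᵥ A *ᵥ x) (i : n) : c ≤ hA.eigenvalues i := by
  have hv : (hA.eigenvectorBasis i).ofLp ⬝ᵥ (hA.eigenvectorBasis i).ofLp = 1 := by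
    have := hA.eigenvectorBasis.inner_eq_one i
    rwa [EuclideanSpace.inner_eq_star_dotProduct, star_trivial] at this
  simpa [hA.mulVec_eigenvectorBasis, hv] using h (hA.eigenvectorBasis i)

lemma exists_eigenvalues_eq_of_mulVec_eq_smul {x : n → ℝ} (hx : x ≠ 0) (hAx : A *ᵥ x = c • x) :
    ∃ i, hA.eigenvalues i = c := by
  have hc : c ∈ spectrum ℝ A := spectrum_toLin' A ▸
    (Module.End.hasEigenvalue_of_hasEigenvector
      (Module.End.hasEigenvector_iff.2 ⟨Module.End.mem_eigenspace_iff.2 hAx, hx⟩)).mem_spectrum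
  rwa [hA.spectrum_real_eq_range_eigenvalues] at hc

lemma iInf_eigenvalues_eq (h : ∀ x : n → ℝ, c * (x ⬝ᵥ x) ≤ x ⬝ᵥ A *ᵥ x) {x : n → ℝ} (hx : x ≠ 0)
    (hAx : A *ᵥ x = c • x) : ⨅ i, hA.eigenvalues i = c := by
  obtain ⟨i, hi⟩ := hA.exists_eigenvalues_eq_of_mulVec_eq_smul hx hAx
  have : Nonempty n := ⟨i⟩
  exact le_antisymm (hi ▸ ciInf_le (Set.finite_range _).bddBelow i)
    (le_ciInf (hA.le_eigenvalues_of_forall_le_dotProduct_mulVec h))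

end Matrix.IsHermitian

namespace SimpleGraph.completeMultipartiteGraph

variable {ι : Type*} [Fintype ι] {V : ι → Type*} [∀ i, Fintype (V i)]
  [DecidableRel (completeMultipartiteGraph V).Adj]

lemma adjMatrix_mulVec_apply (x : (Σ i, V i) → ℝ) (v : Σ i, V i) :
    ((completeMultipartiteGraph V).adjMatrix ℝ *ᵥ x) v = ∑ w, x w - ∑ a, x ⟨v.1, a⟩ := by
  classical
  have hpart : ∑ a, x ⟨v.1, a⟩ = ∑ w : Σ i, V i, if v.1 = w.1 then x w else 0 := by
    rw [Fintype.sum_sigma, Finset.sum_eq_single v.1 (fun i _ hi => by simp [Ne.symm hi]) (by simp)]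
    simp
  rw [hpart, ← Finset.sum_sub_distrib]
  refine Finset.sum_congr rfl fun w _ => ?_
  by_cases h : v.1 = w.1 <;> simp [h]

lemma dotProduct_adjMatrix_mulVec (x : (Σ i, V i) → ℝ) :
    x ⬝ᵥ (completeMultipartiteGraph V).adjMatrix ℝ *ᵥ x =
      (∑ w, x w) ^ 2 - ∑ i, (∑ a, x ⟨i, a⟩) ^ 2 := by
  simp only [dotProduct, completeMultipartiteGraph.adjMatrix_mulVec_apply, mul_sub,
    Finset.sum_sub_distrib, ← Finset.sum_mul, sq]
  rw [Fintype.sum_sigma (fun w => x w * ∑ a, x ⟨w.1, a⟩)]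
  simp [Finset.sum_mul]

lemma neg_mul_dotProduct_le_dotProduct_adjMatrix_mulVec {t : ℕ} (ht : ∀ i, Fintype.card (V i) ≤ t)
    (x : (Σ i, V i) → ℝ) :
    -t * (x ⬝ᵥ x) ≤ x ⬝ᵥ (completeMultipartiteGraph V).adjMatrix ℝ *ᵥ x := by
  have hpart (i : ι) : (∑ a, x ⟨i, a⟩) ^ 2 ≤ t * ∑ a, x ⟨i, a⟩ ^ 2 :=
    sq_sum_le_card_mul_sum_sq.trans (by gcongr; exact_mod_cast ht i)
  have hnorm : x ⬝ᵥ x = ∑ i, ∑ a, x ⟨i, a⟩ ^ 2 := by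
    simp only [dotProduct, Fintype.sum_sigma, sq]
  rw [dotProduct_adjMatrix_mulVec, hnorm, neg_mul, Finset.mul_sum]
  nlinarith [sq_nonneg (∑ w, x w), Finset.sum_le_sum fun i (_ : i ∈ Finset.univ) => hpart i]

lemma adjMatrix_mulVec_comp_fst {t : ℕ} (ht : ∀ i, Fintype.card (V i) = t) {u : ι → ℝ}
    (hu : ∑ i, u i = 0) :
    (completeMultipartiteGraph V).adjMatrix ℝ *ᵥ (u ∘ Sigma.fst) = (-t : ℝ) • (u ∘ Sigma.fst) := by
  ext v
  rw [completeMultipartiteGraph.adjMatrix_mulVec_apply]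
  simp [Fintype.sum_sigma, ht, ← Finset.mul_sum, hu]

end SimpleGraph.completeMultipartiteGraph

lemma lambdaMin_eq_iInf_eigenvalues (G : SimpleGraph V) [DecidableRel G.Adj] :
    lambdaMin G = ⨅ i, (adj_isHermitian G).eigenvalues i := by
  unfold lambdaMin
  congr!

section EquipartiteInvariants

variable {ι : Type} [Fintype ι] [DecidableEq ι] {t : ℕ}

lemma lambdaMin_completeMultipartiteGraph_const [Nontrivial ι] (ht : 0 < t) :
    lambdaMin (completeMultipartiteGraph fun _ : ι => Fin t) = -t := by
  obtain ⟨p, q, hpq⟩ := exists_pair_ne ι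
  set u : ι → ℝ := Pi.single p 1 - Pi.single q 1
  have hu : ∑ i, u i = 0 := by simp [u, Finset.sum_sub_distrib]
  have hu_ne : u ∘ Sigma.fst ≠ (0 : (Σ _ : ι, Fin t) → ℝ) := fun h => by
    simpa [u, hpq] using congrFun h ⟨p, ⟨0, ht⟩⟩
  rw [lambdaMin_eq_iInf_eigenvalues]
  exact (adj_isHermitian _).iInf_eigenvalues_eq
    (completeMultipartiteGraph.neg_mul_dotProduct_le_dotProduct_adjMatrix_mulVec (by simp)) hu_ne
    (completeMultipartiteGraph.adjMatrix_mulVec_comp_fst (by simp) hu)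

lemma chromNum_completeMultipartiteGraph_const (ht : 0 < t) :
    chromNum (completeMultipartiteGraph fun _ : ι => Fin t) = Fintype.card ι := by
  rw [chromNum, completeMultipartiteGraph.chromaticNumber _ fun _ => ⟨0, ht⟩, ENat.toNat_natCast]

lemma IsIndepFinset.card_le_of_completeMultipartiteGraph_const {s : Finset (Σ _ : ι, Fin t)}
    (hs : IsIndepFinset (completeMultipartiteGraph fun _ : ι => Fin t) s) : #s ≤ t := by
  simpa using Finset.card_le_card_of_injOn Sigma.snd (fun v _ => Finset.mem_univ v.2)
    fun v hv w hw h => Sigma.ext (not_not.1 (hs v hv w hw)) (heq_of_eq h)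

lemma isIndepFinset_map_sigmaMk (i : ι) :
    IsIndepFinset (completeMultipartiteGraph fun _ : ι => Fin t)
      (Finset.univ.map (Function.Embedding.sigmaMk i)) := by
  simp [IsIndepFinset]

lemma indepNum_completeMultipartiteGraph_const [Nonempty ι] :
    _root_.indepNum (completeMultipartiteGraph fun _ : ι => Fin t) = t := by
  refine IsGreatest.csSup_eq ⟨⟨_, isIndepFinset_map_sigmaMk (Classical.arbitrary ι), by simp⟩, ?_⟩
  rintro _ ⟨s, hs, rfl⟩
  exact hs.card_le_of_completeMultipartiteGraph_const

lemma theta_completeMultipartiteGraph_const [Nontrivial ι] :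
    theta (completeMultipartiteGraph fun _ : ι => Fin t) = t := by
  have hcard : (2 : ℝ) ≤ Fintype.card ι := by exact_mod_cast Fintype.one_lt_card
  rw [theta, indepNum_completeMultipartiteGraph_const, min_eq_right]
  simp only [Fintype.card_sigma, Fintype.card_fin, Finset.sum_const, Finset.card_univ, smul_eq_mul,
    Nat.cast_mul]
  nlinarith [t.cast_nonneg (α := ℝ)]

end EquipartiteInvariants

lemma edgeCount_completeMultipartiteGraph_fin (k t : ℕ) :
    edgeCount (completeMultipartiteGraph fun _ : Fin k => Fin t) = k.choose 2 * t ^ 2 := by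
  calc edgeCount (completeMultipartiteGraph fun _ : Fin k => Fin t)
      = Nat.card (completeEquipartiteGraph k t).edgeSet :=
        Nat.card_congr completeEquipartiteGraph.completeMultipartiteGraph.mapEdgeSet.symm
    _ = k.choose 2 * t ^ 2 := by
      rw [Nat.card_eq_fintype_card, ← edgeFinset_card, card_edgeFinset_completeEquipartiteGraph]

/-- Subsection 3.3. Let `G` be the complete `k`-partite graph with
`k ≥ 2` parts of size `t ≥ 1` each. Then `λ(G) = -t`, and the bound of Theorem 2.7
holds with equality: `λ(G) = -|E(G)| / (C(χ(G), 2) · θ(G))`. -/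
theorem completeMultipartite_bound_sharp (k t : ℕ) (hk : 2 ≤ k) (ht : 1 ≤ t) :
    lambdaMin (completeMultipartiteGraph (fun _ : Fin k => Fin t)) = -(t : ℝ) ∧
      lambdaMin (completeMultipartiteGraph (fun _ : Fin k => Fin t)) =
        -(edgeCount (completeMultipartiteGraph (fun _ : Fin k => Fin t)) : ℝ) /
          (((chromNum (completeMultipartiteGraph (fun _ : Fin k => Fin t))).choose 2 : ℝ) *
            theta (completeMultipartiteGraph (fun _ : Fin k => Fin t))) := by
  have : Nontrivial (Fin k) := Fin.nontrivial_iff_two_le.2 hk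
  have hlambda := lambdaMin_completeMultipartiteGraph_const (ι := Fin k) ht
  refine ⟨hlambda, ?_⟩
  have hchoose : (0 : ℝ) < k.choose 2 := by exact_mod_cast Nat.choose_pos hk
  rw [hlambda, edgeCount_completeMultipartiteGraph_fin, chromNum_completeMultipartiteGraph_const ht,
    Fintype.card_fin, theta_completeMultipartiteGraph_const]
  push_cast
  field_simp
end

section
/- Let G be a finite simple graph on n vertices with m ≥ 1 edges such that χ(G) = 2 or χ(G) = 3, and set r = χ(G). Then -m / (C(χ(G), 2) · θ(G)) ≤ -2^{r+1} m^r / (r · n^{2r-1}). -/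
/-!
Common definitions: smallest adjacency eigenvalue, independent vertex sets,
edge counts of induced subgraphs, chromatic number, independence number,
and the invariants `η`, `ι`, `θ` from the paper.
-/

open Finset SimpleGraph Matrix

set_option linter.unusedSectionVars false

variable {V : Type} [Fintype V] [DecidableEq V]

/-!
Since `θ(G) ≤ n/2`, the left side is at most `-2m / (C(r,2) n)`. A graph with `χ(G) = r` is
`K_{r+1}`-free, so Turán's theorem gives `2rm ≤ (r-1)n²`, and after clearing denominators the
claim becomes `(r-1)(2m)^(r-1) ≤ n^(2r-2)`. Turán's bound yields this for `r = 2, 3`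
(not beyond: `(r-1)((r-1)/r)^(r-1) > 1` from `r = 4` on).
-/

theorem SimpleGraph.CliqueFree.two_mul_mul_card_edgeFinset_le {W : Type*} [Fintype W]
    {G : SimpleGraph W} [DecidableRel G.Adj] {r : ℕ} (hr : 0 < r) (hG : G.CliqueFree (r + 1)) :
    2 * r * #G.edgeFinset ≤ (r - 1) * Fintype.card W ^ 2 := by
  obtain ⟨H, _, hH⟩ := exists_isTuranMaximal (V := W) hr
  have hiso := ((isTuranMaximal_iff_nonempty_iso_turanGraph hr).mp hH).some
  calc 2 * r * #G.edgeFinset ≤ 2 * r * #H.edgeFinset := Nat.mul_le_mul_left _ (hH.2 hG)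
    _ = 2 * r * #(turanGraph (Fintype.card W) r).edgeFinset := by rw [hiso.card_edgeFinset_eq]
    _ ≤ _ := mul_card_edgeFinset_turanGraph_le

lemma edgeCount_eq_card_edgeFinset {W : Type} [Fintype W] (G : SimpleGraph W)
    [DecidableRel G.Adj] : edgeCount G = #G.edgeFinset := by
  rw [edgeCount, Nat.card_eq_card_toFinset]
  rfl

lemma nonempty_of_chromNum_ne_zero {W : Type} {G : SimpleGraph W} (h : chromNum G ≠ 0) :
    Nonempty W := by
  rw [← not_isEmpty_iff, ← G.chromaticNumber_eq_zero_iff]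
  exact fun h0 => h (by rw [chromNum, h0]; rfl)

lemma two_mul_chromNum_mul_edgeCount_le {W : Type} [Fintype W] (G : SimpleGraph W)
    (h : chromNum G ≠ 0) :
    2 * chromNum G * edgeCount G ≤ (chromNum G - 1) * Fintype.card W ^ 2 := by
  classical
  rw [edgeCount_eq_card_edgeFinset]
  exact (G.colorable_chromaticNumber_of_fintype.cliqueFree (Nat.lt_succ_self _)
    ).two_mul_mul_card_edgeFinset_le (Nat.pos_of_ne_zero h)

lemma one_le_indepNum {W : Type} [Finite W] [Nonempty W] (G : SimpleGraph W) :
    1 ≤ _root_.indepNum G := by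
  have hbdd : BddAbove {k | ∃ s : Finset W, IsIndepFinset G s ∧ #s = k} := by
    have := Fintype.ofFinite W
    refine ⟨Fintype.card W, ?_⟩
    rintro _ ⟨s, -, rfl⟩
    exact card_le_univ s
  obtain ⟨v⟩ := ‹Nonempty W›
  refine le_csSup hbdd ⟨{v}, ?_, card_singleton v⟩
  simp [IsIndepFinset]

lemma theta_pos {W : Type} [Fintype W] [Nonempty W] (G : SimpleGraph W) : 0 < theta G := by
  have hα : (1 : ℝ) ≤ _root_.indepNum G := by exact_mod_cast one_le_indepNum G
  exact lt_min (by simp [Fintype.card_pos]) (by linarith)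

theorem neg_div_choose_two_mul_le_of_turan {r : ℕ} (hr : r = 2 ∨ r = 3) {m n θ : ℝ}
    (hm : 0 ≤ m) (hθ : 0 < θ) (hθn : θ ≤ n / 2) (hturan : 2 * r * m ≤ (r - 1) * n ^ 2) :
    -m / (r.choose 2 * θ) ≤ -(2 ^ (r + 1) * m ^ r) / (r * n ^ (2 * r - 1)) := by
  have hn : 0 < n := by linarith
  rcases hr with rfl | rfl
  all_goals
    norm_num at hturan ⊢
    rw [neg_div, neg_div, neg_le_neg_iff, div_le_div_iff₀ (by positivity) (by positivity)]
  · calc 8 * m ^ 2 * θ ≤ 4 * m ^ 2 * n := by nlinarith [sq_nonneg m]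
      _ ≤ m * (2 * n ^ 3) := by nlinarith [mul_le_mul_of_nonneg_left hturan (mul_nonneg hm hn.le)]
  · have hm2 : 9 * m ^ 2 ≤ n ^ 4 := by nlinarith
    have hm3n : 0 ≤ m ^ 3 * n := by positivity
    calc 16 * m ^ 3 * (3 * θ) ≤ 24 * m ^ 3 * n := by nlinarith [pow_nonneg hm 3]
      _ ≤ m * (3 * n ^ 5) := by nlinarith [mul_le_mul_of_nonneg_left hm2 (mul_nonneg hm hn.le)]

theorem bound_le_nikiforov_of_chromatic_general (G : SimpleGraph V)
    (hchi : chromNum G = 2 ∨ chromNum G = 3) :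
    -(edgeCount G : ℝ) / (((chromNum G).choose 2 : ℝ) * theta G) ≤
      -((2 : ℝ) ^ (chromNum G + 1) * (edgeCount G : ℝ) ^ chromNum G) /
        ((chromNum G : ℝ) * (Fintype.card V : ℝ) ^ (2 * chromNum G - 1)) := by
  have hχ : chromNum G ≠ 0 := by omega
  have : Nonempty V := nonempty_of_chromNum_ne_zero hχ
  have hturan : (2 * chromNum G * edgeCount G : ℝ) ≤ (chromNum G - 1) * Fintype.card V ^ 2 := by
    rw [← Nat.cast_pred (Nat.pos_of_ne_zero hχ)]
    exact_mod_cast two_mul_chromNum_mul_edgeCount_le G hχ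
  exact neg_div_choose_two_mul_le_of_turan hchi (Nat.cast_nonneg _) (theta_pos G)
    (min_le_left _ _) hturan

/-- Theorem 4.2(a). Let `G` have `n` vertices, `m ≥ 1` edges and
`χ(G) = 2` or `3`; set `r = χ(G)`. Then
`-m / (C(χ(G),2) · θ(G)) ≤ -2^(r+1) m^r / (r · n^(2r-1))`. -/
theorem bound_le_nikiforov_of_chromatic (G : SimpleGraph V)
    (hm : 1 ≤ edgeCount G) (hchi : chromNum G = 2 ∨ chromNum G = 3) :
    -(edgeCount G : ℝ) / (((chromNum G).choose 2 : ℝ) * theta G) ≤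
      -((2 : ℝ) ^ (chromNum G + 1) * (edgeCount G : ℝ) ^ chromNum G) /
        ((chromNum G : ℝ) * (Fintype.card V : ℝ) ^ (2 * chromNum G - 1)) :=
  bound_le_nikiforov_of_chromatic_general G hchi
end
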